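/- Let 0 < α < s and let ν be a measure on ℝⁿ with ν(B[x,r]) ≤ r^s for all x ∈ ℝⁿ and r > 0. Define μ := ∑_{k=0}^∞ 2^(−kα) · ν⌊A_k with A_k := {y : k ≤ |y| < k+1}. Then there is a constant C(α) (one may take C(α) = 2^(α/2)·3^α/(1 − 2^(−α))) such that for every x ∈ ℝⁿ and every 0 < r ≤ |x|/2 one has μ(B[x,r]) ≤ C(α) · |x|^(−α) · r^s. -/

import Mathlib

open MeasureTheory Metric

/-!
Points of `B[x, r]` with `r ≤ |x|/2` have norm at least `|x|/2`, so the ball only meets the annuli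
`A_k` with `k ≥ k₀ := ⌈|x|/2 - 1⌉₊`. Bounding each `ν(B[x, r] ∩ A_k)` by `r^s` and summing the
geometric tail of the weights gives `μ(B[x, r]) ≤ 2^(-k₀α) r^s / (1 - 2^(-α))`, and
`2^(-k₀) ≤ 2/|x| ≤ 3√2/|x|` because `k₀ + 1 ≤ 2^k₀`.
-/

open scoped ENNReal

theorem MeasureTheory.Measure.sum_smul_restrict_apply_le {X : Type*} [MeasurableSpace X]
    (ν : Measure X) (A : ℕ → Set X) (w : ℕ → ℝ≥0∞) {B : Set X} (hB : MeasurableSet B)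
    {k₀ : ℕ} (hBA : ∀ k < k₀, Disjoint B (A k)) :
    Measure.sum (fun k => w k • ν.restrict (A k)) B ≤ (∑' i, w (i + k₀)) * ν B := by
  have hhead : ∑ k ∈ Finset.range k₀, w k * ν (B ∩ A k) = 0 :=
    Finset.sum_eq_zero fun k hk => by
      rw [(hBA k (Finset.mem_range.mp hk)).inter_eq, measure_empty, mul_zero]
  calc Measure.sum (fun k => w k • ν.restrict (A k)) B = ∑' k, w k * ν (B ∩ A k) := by
        simp only [Measure.sum_apply _ hB, Measure.smul_apply, Measure.restrict_apply hB,
          smul_eq_mul]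
    _ = ∑' i, w (i + k₀) * ν (B ∩ A (i + k₀)) := by
        rw [← ENNReal.summable.sum_add_tsum_nat_add' (k := k₀), hhead, zero_add]
    _ ≤ ∑' i, w (i + k₀) * ν B :=
        ENNReal.tsum_le_tsum fun i => by gcongr; exact Set.inter_subset_left
    _ = (∑' i, w (i + k₀)) * ν B := ENNReal.tsum_mul_right

theorem hasSum_rpow_neg_natCast_add_mul {b α : ℝ} (hb : 1 < b) (hα : 0 < α) (k₀ : ℕ) :
    HasSum (fun i : ℕ => b ^ (-((i + k₀ : ℕ) : ℝ) * α)) (b ^ (-(k₀ : ℝ) * α) / (1 - b ^ (-α))) := by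
  have hb0 : 0 < b := zero_lt_one.trans hb
  have hq : b ^ (-α) < 1 := Real.rpow_lt_one_of_one_lt_of_neg hb (neg_lt_zero.mpr hα)
  have hterm (i : ℕ) :
      b ^ (-((i + k₀ : ℕ) : ℝ) * α) = b ^ (-(k₀ : ℝ) * α) * (b ^ (-α)) ^ i := by
    rw [← Real.rpow_mul_natCast hb0.le, ← Real.rpow_add hb0]
    push_cast
    ring_nf
  simp only [hterm, div_eq_mul_inv]
  exact (hasSum_geometric_of_lt_one (Real.rpow_nonneg hb0.le (-α)) hq).mul_left _

theorem two_rpow_neg_natCeil_le {u : ℝ} (hu : 0 < u) :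
    (2 : ℝ) ^ (-(⌈u / 2 - 1⌉₊ : ℝ)) ≤ 2 / u := by
  set k₀ := ⌈u / 2 - 1⌉₊
  have hk₀ : u / 2 ≤ k₀ + 1 := by linarith [Nat.le_ceil (u / 2 - 1)]
  have hpow : (k₀ : ℝ) + 1 ≤ 2 ^ k₀ := by exact_mod_cast Nat.lt_two_pow_self (n := k₀)
  rw [Real.rpow_neg zero_le_two, Real.rpow_natCast]
  exact inv_le_of_inv_le₀ (by positivity) (by rw [inv_div]; linarith)

theorem two_rpow_neg_natCeil_mul_le {α u : ℝ} (hα : 0 ≤ α) (hu : 0 < u) :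
    (2 : ℝ) ^ (-(⌈u / 2 - 1⌉₊ : ℝ) * α) ≤ 2 ^ (α / 2) * 3 ^ α * u ^ (-α) := by
  have hrhs : (2 : ℝ) ^ (α / 2) * 3 ^ α * u ^ (-α) = (√2 * 3 / u) ^ α := by
    rw [Real.div_rpow (by positivity) hu.le, Real.mul_rpow (by positivity) (by norm_num),
      Real.sqrt_eq_rpow, ← Real.rpow_mul zero_le_two, Real.rpow_neg hu.le, div_eq_mul_inv,
      one_div_mul_eq_div]
    ring_nf
  have h2 : (2 : ℝ) ≤ √2 * 3 := by
    nlinarith [Real.sq_sqrt (zero_le_two : (0 : ℝ) ≤ 2), Real.sqrt_nonneg 2]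
  rw [hrhs, Real.rpow_mul zero_le_two]
  gcongr
  exact (two_rpow_neg_natCeil_le hu).trans (by gcongr)

theorem stmt_8_general (n : ℕ) (s α : ℝ) (hα : 0 < α)
    (ν : Measure (EuclideanSpace ℝ (Fin n)))
    (hν : ∀ (x : EuclideanSpace ℝ (Fin n)) (r : ℝ), 0 < r →
      ν (closedBall x r) ≤ ENNReal.ofReal (r ^ s))
    (A : ℕ → Set (EuclideanSpace ℝ (Fin n)))
    (hA : ∀ k, A k = {y | (k : ℝ) ≤ ‖y‖ ∧ ‖y‖ < (k : ℝ) + 1})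
    (μ : Measure (EuclideanSpace ℝ (Fin n)))
    (hμ : μ = Measure.sum (fun k : ℕ =>
      ENNReal.ofReal ((2 : ℝ) ^ (-(k : ℝ) * α)) • ν.restrict (A k))) :
    ∀ (x : EuclideanSpace ℝ (Fin n)) (r : ℝ), 0 < r → r ≤ ‖x‖ / 2 →
      μ (closedBall x r) ≤
        ENNReal.ofReal ((2 : ℝ) ^ (α / 2) * 3 ^ α / (1 - (2 : ℝ) ^ (-α))
          * ‖x‖ ^ (-α) * r ^ s) := by
  intro x r hr hrx
  have hx : 0 < ‖x‖ := by linarith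
  set k₀ := ⌈‖x‖ / 2 - 1⌉₊
  have hBA : ∀ k < k₀, Disjoint (closedBall x r) (A k) := fun k hk => by
    have hk' : r + (k + 1) ≤ dist x 0 := by rw [dist_zero_right]; linarith [Nat.lt_ceil.mp hk]
    rw [hA]
    exact (closedBall_disjoint_ball hk').mono_right fun y hy => mem_ball_zero_iff.mpr hy.2
  have hsum := hasSum_rpow_neg_natCast_add_mul one_lt_two hα k₀
  have hq : (2 : ℝ) ^ (-α) < 1 := Real.rpow_lt_one_of_one_lt_of_neg one_lt_two (by linarith)
  calc μ (closedBall x r)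
      ≤ (∑' i, ENNReal.ofReal ((2 : ℝ) ^ (-((i + k₀ : ℕ) : ℝ) * α))) * ν (closedBall x r) := by
        rw [hμ]
        exact Measure.sum_smul_restrict_apply_le ν A _ measurableSet_closedBall hBA
    _ ≤ ENNReal.ofReal ((2 : ℝ) ^ (-(k₀ : ℝ) * α) / (1 - 2 ^ (-α)) * r ^ s) := by
        rw [← ENNReal.ofReal_tsum_of_nonneg (fun _ => by positivity) hsum.summable,
          hsum.tsum_eq, ENNReal.ofReal_mul (div_nonneg (by positivity) (by linarith))]
        gcongr
        exact hν x r hr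
    _ ≤ _ := by
        gcongr ENNReal.ofReal ?_
        have h1q : 0 < 1 - (2 : ℝ) ^ (-α) := by linarith
        calc (2 : ℝ) ^ (-(k₀ : ℝ) * α) / (1 - 2 ^ (-α)) * r ^ s
            = 2 ^ (-(k₀ : ℝ) * α) * r ^ s / (1 - 2 ^ (-α)) := by ring
          _ ≤ 2 ^ (α / 2) * 3 ^ α * ‖x‖ ^ (-α) * r ^ s / (1 - 2 ^ (-α)) := by
            gcongr
            exact two_rpow_neg_natCeil_mul_le hα.le hx
          _ = _ := by ring

theorem stmt_8 (n : ℕ) (s α : ℝ) (hα : 0 < α) (hαs : α < s)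
    (ν : Measure (EuclideanSpace ℝ (Fin n)))
    (hν : ∀ (x : EuclideanSpace ℝ (Fin n)) (r : ℝ), 0 < r →
      ν (closedBall x r) ≤ ENNReal.ofReal (r ^ s))
    (A : ℕ → Set (EuclideanSpace ℝ (Fin n)))
    (hA : ∀ k, A k = {y | (k : ℝ) ≤ ‖y‖ ∧ ‖y‖ < (k : ℝ) + 1})
    (μ : Measure (EuclideanSpace ℝ (Fin n)))
    (hμ : μ = Measure.sum (fun k : ℕ =>
      ENNReal.ofReal ((2 : ℝ) ^ (-(k : ℝ) * α)) • ν.restrict (A k))) :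
    ∀ (x : EuclideanSpace ℝ (Fin n)) (r : ℝ), 0 < r → r ≤ ‖x‖ / 2 →
      μ (closedBall x r) ≤
        ENNReal.ofReal ((2 : ℝ) ^ (α / 2) * 3 ^ α / (1 - (2 : ℝ) ^ (-α))
          * ‖x‖ ^ (-α) * r ^ s) :=
  stmt_8_general n s α hα ν hν A hA μ hμ
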